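/- arXiv:1401.4689 — 4 statements merged into one kernel-verified Lean document; each statement's English description precedes it below -/
import Mathlib

section
/- Let S be a finite alphabet with a complementation and let V ⊆ S^d be a finite polybox code without twin pairs. For v ∈ V let d(v) be the number of words u ∈ V such that u and v are i-siblings for some i ∈ {1,…,d}. Suppose u, v ∈ V are i-siblings for some i, and set n = d(u), m = d(v). If n + m = 2d, then there are i ∈ {1,…,d} and l ∈ S with |V^{i,l} ∪ V^{i,l'}| ≥ 2d − 2; and if n + m ≤ 2d − 1, then there are i ∈ {1,…,d} and l ∈ S with |V^{i,l} ∪ V^{i,l'}| ≥ n + m − 1. -/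
variable {S : Type}

/-- Two words are dichotomous: at some position they carry complementary letters. -/
def Dicho {d : ℕ} (c : S → S) (u v : Fin d → S) : Prop := ∃ j, v j = c (u j)

/-- Two words form a twin pair. -/
def TwinPair {d : ℕ} (c : S → S) (u v : Fin d → S) : Prop :=
  ∃ j, v j = c (u j) ∧ ∀ i, i ≠ j → v i = u i

/-- A polybox code: a set of pairwise dichotomous words. -/
def PolyboxCode {d : ℕ} (c : S → S) (V : Set (Fin d → S)) : Prop :=
  ∀ u ∈ V, ∀ v ∈ V, u ≠ v → Dicho c u v

/-- The code contains no twin pair. -/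
def NoTwinPair {d : ℕ} (c : S → S) (V : Set (Fin d → S)) : Prop :=
  ∀ u ∈ V, ∀ v ∈ V, ¬ TwinPair c u v

/-- `ES`: sets containing exactly one of `s`, `s'` for every letter `s`. -/
def ESet (c : S → S) : Set (Set S) := {B | ∀ s, Xor' (s ∈ B) (c s ∈ B)}

/-- `Es`: members of `ES` containing the letter `s`. -/
def ELetter (c : S → S) (s : S) : Set (Set S) := {B | B ∈ ESet c ∧ s ∈ B}

/-- The equicomplementary realization `v̌ ⊆ (ES)^d` of a word `v`. -/
def Realize {d : ℕ} (c : S → S) (v : Fin d → S) : Set (Fin d → Set S) :=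
  {x | ∀ i, x i ∈ ELetter c (v i)}

/-- The union `⋃_{v ∈ V} v̌`. -/
def RealizeSet {d : ℕ} (c : S → S) (V : Set (Fin d → S)) : Set (Fin d → Set S) :=
  ⋃ v ∈ V, Realize c v

/-- Two codes are equivalent if their realizations coincide. -/
def EquivCodes {d : ℕ} (c : S → S) (V W : Set (Fin d → S)) : Prop :=
  RealizeSet c V = RealizeSet c W

/-- A partition code: a polybox code whose realization is the whole box `(ES)^d`. -/
def PartitionCode {d : ℕ} (c : S → S) (U : Set (Fin d → S)) : Prop :=
  PolyboxCode c U ∧ RealizeSet c U = {x | ∀ i, x i ∈ ESet c}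

/-- `V^{i,l}`: the words of `V` with letter `l` at position `i`. -/
def Subcode {d : ℕ} (V : Set (Fin d → S)) (i : Fin d) (l : S) : Set (Fin d → S) :=
  {v | v ∈ V ∧ v i = l}

/-- `u` and `v` are `i`-siblings: `v i ∉ {u i, (u i)'}` and the words obtained by
deleting the `i`-th coordinate form a twin pair. -/
def Siblings {d : ℕ} (c : S → S) (i : Fin d) (u v : Fin d → S) : Prop :=
  v i ≠ u i ∧ v i ≠ c (u i) ∧
    ∃ j, j ≠ i ∧ v j = c (u j) ∧ ∀ k, k ≠ i → k ≠ j → v k = u k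

/-- The degree of `v` in the graph of siblings on `V`. -/
noncomputable def sibDeg {d : ℕ} (c : S → S) (V : Set (Fin d → S))
    (v : Fin d → S) : ℕ :=
  {u ∈ V | ∃ i, Siblings c i v u}.ncard


/-!
The siblings of `u` split according to the coordinate in which they are siblings, and a
sibling of `u` in a coordinate `k ≠ p` carries `u p` or `(u p)'` at `p`. As `v` itself carries
`u p` or `(u p)'` at every `p ≠ i`, all siblings of `u` and of `v`, except their `p`-siblings,
lie in `V^{p,u_p} ∪ V^{p,u_p'}`; no word is a sibling of both `u` and `v`. Since `v` is an
`i`-sibling of `u` and `u` one of `v`, at most `n + m - 2` siblings are spread over the `d - 1`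
coordinates `p ≠ i`, and pigeonhole gives a coordinate with few of them.
-/

namespace Siblings

variable {d : ℕ} {c : S → S} {i j k p : Fin d} {u v w : Fin d → S}

theorem symm (hc : Function.Involutive c) (h : Siblings c i u v) : Siblings c i v u := by
  obtain ⟨hne, hne', j, hji, hj, hoff⟩ := h
  refine ⟨fun e => hne e.symm, fun e => hne' ?_, j, hji, ?_,
    fun k hki hkj => (hoff k hki hkj).symm⟩
  · rw [e, hc]
  · rw [hj, hc]

theorem index_unique (hi : Siblings c i u v) (hj : Siblings c j u v) : i = j := by
  obtain ⟨-, -, k, -, hk, hoff⟩ := hi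
  obtain ⟨hne, hne', -⟩ := hj
  by_contra hij
  by_cases hjk : j = k
  · exact hne' (hjk ▸ hk)
  · exact hne (hoff j (Ne.symm hij) hjk)

theorem apply_eq_or_eq_compl (h : Siblings c k u w) (hp : p ≠ k) :
    w p = u p ∨ w p = c (u p) := by
  obtain ⟨-, -, j, -, hj, hoff⟩ := h
  by_cases hpj : p = j
  · exact Or.inr (hpj ▸ hj)
  · exact Or.inl (hoff p hp hpj)

theorem one_lt_dim (h : Siblings c i u v) : 1 < d := by
  obtain ⟨-, -, j, hji, -⟩ := h
  have := Fin.val_ne_of_ne hji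
  omega

/- Where `u` and `v` carry equal or complementary letters, `w` is related in this way to both
or to neither; this forces `k = j = i`. Off `i` the three words then differ only by
complementation, and the coordinates complemented from `u` to `v`, from `u` to `w` and from `v`
to `w` would be three singletons, each the symmetric difference of the other two. -/
theorem not_common_sibling (hc : Function.Involutive c) (hfix : ∀ s, c s ≠ s)
    (huv : Siblings c i u v) (huw : Siblings c k u w) (hvw : Siblings c j v w) : False := by
  have hcc : ∀ s, c (c s) = s := hc
  obtain ⟨hvi, hvi', l, hli, hvl, hvoff⟩ := huv
  obtain ⟨hwk, hwk', m, hmk, hwm, hwoff⟩ := huw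
  obtain ⟨hwj, hwj', n, hnj, hwn, hwoff'⟩ := hvw
  have hk : k = i := by grind
  have hj : j = i := by grind
  grind

end Siblings

section Counting

open Finset Classical

variable {d : ℕ} {c : S → S} {V : Finset (Fin d → S)} {i p : Fin d} {u v : Fin d → S}

noncomputable def siblingsAt (c : S → S) (V : Finset (Fin d → S)) (p : Fin d)
    (x : Fin d → S) : Finset (Fin d → S) :=
  {w ∈ V | Siblings c p x w}

noncomputable def siblingsOf (c : S → S) (V : Finset (Fin d → S)) (x : Fin d → S) :
    Finset (Fin d → S) :=
  {w ∈ V | ∃ p, Siblings c p x w}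

theorem sibDeg_coe (c : S → S) (V : Finset (Fin d → S)) (x : Fin d → S) :
    sibDeg c ↑V x = #(siblingsOf c V x) := by
  rw [sibDeg, siblingsOf, ← Set.ncard_coe_finset, coe_filter]
  rfl

theorem ncard_subcode_union_coe (V : Finset (Fin d → S)) (p : Fin d) (l l' : S) :
    (Subcode ↑V p l ∪ Subcode ↑V p l').ncard = #{w ∈ V | w p = l ∨ w p = l'} := by
  rw [← Set.ncard_coe_finset, coe_filter]
  congr 1
  ext w
  simp only [Subcode, Set.mem_union, Set.mem_ofPred_eq, mem_coe]
  tauto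

theorem siblingsAt_subset_siblingsOf (c : S → S) (V : Finset (Fin d → S)) (p : Fin d)
    (x : Fin d → S) : siblingsAt c V p x ⊆ siblingsOf c V x :=
  fun _ hw => mem_filter.2 ⟨(mem_filter.1 hw).1, p, (mem_filter.1 hw).2⟩

theorem card_siblingsOf_eq_sum (c : S → S) (V : Finset (Fin d → S)) (x : Fin d → S) :
    #(siblingsOf c V x) = ∑ p, #(siblingsAt c V p x) := by
  have hunion : siblingsOf c V x = univ.biUnion (siblingsAt c V · x) := by
    ext w
    simp [siblingsOf, siblingsAt]
  rw [hunion, card_biUnion]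
  intro p _ q _ hpq
  exact disjoint_filter.2 fun w _ hp hq => hpq (hp.index_unique hq)

theorem disjoint_siblingsOf (hc : Function.Involutive c) (hfix : ∀ s, c s ≠ s)
    (h : Siblings c i u v) : Disjoint (siblingsOf c V u) (siblingsOf c V v) :=
  disjoint_filter.2 fun _ _ ⟨_, hu⟩ ⟨_, hv⟩ => h.not_common_sibling hc hfix hu hv

theorem sum_card_siblingsAt_add_two_le (hc : Function.Involutive c) (hu : u ∈ V) (hv : v ∈ V)
    (h : Siblings c i u v) :
    ∑ p ∈ univ.erase i, (#(siblingsAt c V p u) + #(siblingsAt c V p v)) + 2 ≤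
      #(siblingsOf c V u) + #(siblingsOf c V v) := by
  have hvu : 1 ≤ #(siblingsAt c V i u) := card_pos.2 ⟨v, mem_filter.2 ⟨hv, h⟩⟩
  have huv : 1 ≤ #(siblingsAt c V i v) := card_pos.2 ⟨u, mem_filter.2 ⟨hu, h.symm hc⟩⟩
  rw [card_siblingsOf_eq_sum, card_siblingsOf_eq_sum, ← add_sum_erase _ _ (mem_univ i),
    ← add_sum_erase _ _ (mem_univ i), sum_add_distrib]
  omega

theorem siblingsOf_sdiff_union_subset (hc : Function.Involutive c) (h : Siblings c i u v)
    (hp : p ≠ i) :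
    (siblingsOf c V u \ siblingsAt c V p u) ∪ (siblingsOf c V v \ siblingsAt c V p v) ⊆
      {w ∈ V | w p = u p ∨ w p = c (u p)} := by
  have hvp := h.apply_eq_or_eq_compl hp
  intro w hw
  simp only [siblingsOf, siblingsAt, mem_union, mem_sdiff, mem_filter] at hw
  rcases hw with ⟨⟨hwV, k, hk⟩, hpk⟩ | ⟨⟨hwV, k, hk⟩, hpk⟩
  · have hwp := hk.apply_eq_or_eq_compl (p := p) fun e => hpk ⟨hwV, e ▸ hk⟩
    exact mem_filter.2 ⟨hwV, hwp⟩
  · have hwp := hk.apply_eq_or_eq_compl (p := p) fun e => hpk ⟨hwV, e ▸ hk⟩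
    refine mem_filter.2 ⟨hwV, ?_⟩
    rcases hvp with hvp | hvp <;> rw [hvp] at hwp
    · exact hwp
    · rwa [hc, or_comm] at hwp

theorem card_siblingsOf_add_sub_le (hc : Function.Involutive c) (hfix : ∀ s, c s ≠ s)
    (h : Siblings c i u v) (hp : p ≠ i) :
    #(siblingsOf c V u) + #(siblingsOf c V v) -
        (#(siblingsAt c V p u) + #(siblingsAt c V p v)) ≤
      #{w ∈ V | w p = u p ∨ w p = c (u p)} := by
  have hcard := card_le_card (siblingsOf_sdiff_union_subset (V := V) hc h hp)
  rw [card_union_of_disjoint ((disjoint_siblingsOf hc hfix h).mono sdiff_subset sdiff_subset),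
    card_sdiff_of_subset (siblingsAt_subset_siblingsOf c V p u),
    card_sdiff_of_subset (siblingsAt_subset_siblingsOf c V p v)] at hcard
  have := card_le_card (siblingsAt_subset_siblingsOf c V p u)
  have := card_le_card (siblingsAt_subset_siblingsOf c V p v)
  omega

theorem exists_le_card_filter_apply_eq_or_eq_compl (hc : Function.Involutive c)
    (hfix : ∀ s, c s ≠ s) (hu : u ∈ V) (hv : v ∈ V) (h : Siblings c i u v) {b : ℕ}
    (hb : #(siblingsOf c V u) + #(siblingsOf c V v) < b * (d - 1) + 2) :
    ∃ p l, #(siblingsOf c V u) + #(siblingsOf c V v) + 1 - b ≤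
      #{w ∈ V | w p = l ∨ w p = c l} := by
  have hsum := sum_card_siblingsAt_add_two_le hc hu hv h
  have hlt : ∑ p ∈ univ.erase i, (#(siblingsAt c V p u) + #(siblingsAt c V p v)) <
      ∑ _p ∈ univ.erase i, b := by
    rw [sum_const, card_erase_of_mem (mem_univ i), card_univ, Fintype.card_fin, smul_eq_mul,
      mul_comm]
    omega
  obtain ⟨p, hpi, hpb⟩ := exists_lt_of_sum_lt hlt
  have := card_siblingsOf_add_sub_le (V := V) hc hfix h (ne_of_mem_erase hpi)
  exact ⟨p, u p, by omega⟩

end Counting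

theorem siblings_degree_distribution_general {d : ℕ} (c : S → S)
    (hinv : Function.Involutive c) (hfix : ∀ s, c s ≠ s)
    (V : Set (Fin d → S)) (hVfin : V.Finite)
    (u v : Fin d → S) (hu : u ∈ V) (hv : v ∈ V)
    (hsib : ∃ i, Siblings c i u v) :
    ((sibDeg c V u + sibDeg c V v = 2 * d →
        ∃ (i : Fin d) (l : S),
          2 * d - 2 ≤ (Subcode V i l ∪ Subcode V i (c l)).ncard) ∧
      (sibDeg c V u + sibDeg c V v ≤ 2 * d - 1 →
        ∃ (i : Fin d) (l : S),
          sibDeg c V u + sibDeg c V v - 1 ≤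
            (Subcode V i l ∪ Subcode V i (c l)).ncard)) := by
  classical
  obtain ⟨i, hi⟩ := hsib
  have hd := hi.one_lt_dim
  lift V to Finset (Fin d → S) using hVfin
  simp only [sibDeg_coe, ncard_subcode_union_coe]
  refine ⟨fun hsum => ?_, fun hsum => ?_⟩
  · obtain ⟨p, l, hpl⟩ :=
      exists_le_card_filter_apply_eq_or_eq_compl hinv hfix hu hv hi (b := 3) (by omega)
    exact ⟨p, l, by omega⟩
  · obtain ⟨p, l, hpl⟩ :=
      exists_le_card_filter_apply_eq_or_eq_compl hinv hfix hu hv hi (b := 2) (by omega)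
    exact ⟨p, l, by omega⟩

theorem siblings_degree_distribution {d : ℕ} [Fintype S] (c : S → S)
    (hinv : Function.Involutive c) (hfix : ∀ s, c s ≠ s)
    (V : Set (Fin d → S)) (hVfin : V.Finite)
    (hV : PolyboxCode c V) (hVt : NoTwinPair c V)
    (u v : Fin d → S) (hu : u ∈ V) (hv : v ∈ V)
    (hsib : ∃ i, Siblings c i u v) :
    ((sibDeg c V u + sibDeg c V v = 2 * d →
        ∃ (i : Fin d) (l : S),
          2 * d - 2 ≤ (Subcode V i l ∪ Subcode V i (c l)).ncard) ∧
      (sibDeg c V u + sibDeg c V v ≤ 2 * d - 1 →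
        ∃ (i : Fin d) (l : S),
          sibDeg c V u + sibDeg c V v - 1 ≤
            (Subcode V i l ∪ Subcode V i (c l)).ncard)) :=
  siblings_degree_distribution_general c hinv hfix V hVfin u v hu hv hsib
end

section
/- Let G be a finite simple graph with at least one edge, and let m = max{d(v) + d(u) : v and u are adjacent vertices of G}, where d(v) denotes the degree of v. Then the average degree of G satisfies d(G) = (Σ_v d(v))/|V(G)| ≤ m/2. -/
/-!
Count `∑ (d u + d v)` over the darts `(u, v)` of `G`. Each vertex is the tail of `d v` darts and
the head of `d v` darts, so the count is `2 ∑ d(v)²`; each term is at most `m` and there are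
`∑ d(v)` darts, so `2 ∑ d(v)² ≤ m ∑ d(v)`. Cauchy–Schwarz, `(∑ d(v))² ≤ n ∑ d(v)²`, then gives
`∑ d(v) ≤ n m / 2`.
-/

open Finset

namespace SimpleGraph

variable {V : Type*} [Fintype V] (G : SimpleGraph V) [DecidableRel G.Adj]

theorem sum_dart_fst_eq_sum_degree_smul {M : Type*} [AddCommMonoid M] (f : V → M) :
    ∑ d : G.Dart, f d.fst = ∑ v, G.degree v • f v := by
  classical
  rw [← sum_fiberwise univ (fun d : G.Dart => d.fst)]
  refine sum_congr rfl fun v _ => ?_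
  rw [sum_congr rfl fun d hd => congrArg f (mem_filter.mp hd).2, sum_const,
    G.dart_fst_fiber_card_eq_degree]

theorem sum_dart_snd_eq_sum_dart_fst {M : Type*} [AddCommMonoid M] (f : V → M) :
    ∑ d : G.Dart, f d.snd = ∑ d : G.Dart, f d.fst :=
  Fintype.sum_equiv Dart.symm_involutive.toPerm _ _ fun _ => rfl

theorem two_mul_sum_degree_sq_le {m : ℕ}
    (hm : ∀ u v, G.Adj u v → G.degree u + G.degree v ≤ m) :
    2 * ∑ v, G.degree v ^ 2 ≤ m * ∑ v, G.degree v :=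
  calc 2 * ∑ v, G.degree v ^ 2
      = ∑ d : G.Dart, (G.degree d.fst + G.degree d.snd) := by
        rw [sum_add_distrib, G.sum_dart_snd_eq_sum_dart_fst fun v => G.degree v,
          G.sum_dart_fst_eq_sum_degree_smul fun v => G.degree v]
        simp only [smul_eq_mul, sq]
        ring
    _ ≤ ∑ _d : G.Dart, m := sum_le_sum fun d _ => hm _ _ d.adj
    _ = m * ∑ v, G.degree v := by
        rw [sum_const, card_univ, dart_card_eq_sum_degrees, smul_eq_mul, mul_comm]

end SimpleGraph

theorem Finset.sum_le_card_mul_of_sum_sq_le_mul_sum {ι K : Type*} [Field K] [LinearOrder K]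
    [IsStrictOrderedRing K] {s : Finset ι} {f : ι → K} {c : K} (hc : 0 ≤ c)
    (h : ∑ i ∈ s, f i ^ 2 ≤ c * ∑ i ∈ s, f i) :
    ∑ i ∈ s, f i ≤ #s * c := by
  rcases le_or_gt (∑ i ∈ s, f i) 0 with hneg | hpos
  · exact hneg.trans (by positivity)
  · refine le_of_mul_le_mul_right ?_ hpos
    calc (∑ i ∈ s, f i) * ∑ i ∈ s, f i
        = (∑ i ∈ s, f i) ^ 2 := (sq _).symm
      _ ≤ #s * ∑ i ∈ s, f i ^ 2 := sq_sum_le_card_mul_sum_sq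
      _ ≤ #s * (c * ∑ i ∈ s, f i) := by gcongr
      _ = #s * c * ∑ i ∈ s, f i := (mul_assoc _ _ _).symm

theorem average_degree_le_max_adjacent_sum_div_two_general
    {V : Type} [Fintype V] (G : SimpleGraph V) [DecidableRel G.Adj]
    (m : ℕ)
    (hm : IsGreatest {k | ∃ u v, G.Adj u v ∧ G.degree u + G.degree v = k} m) :
    ((∑ v : V, G.degree v : ℚ)) / (Fintype.card V : ℚ) ≤ (m : ℚ) / 2 := by
  have hsq : 2 * ∑ v, G.degree v ^ 2 ≤ m * ∑ v, G.degree v :=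
    G.two_mul_sum_degree_sq_le fun u v huv => hm.2 ⟨u, v, huv, rfl⟩
  have hsq_rat : ∑ v, (G.degree v : ℚ) ^ 2 ≤ (m / 2 : ℚ) * ∑ v, (G.degree v : ℚ) := by
    have : (2 * ∑ v, G.degree v ^ 2 : ℚ) ≤ m * ∑ v, G.degree v := by exact_mod_cast hsq
    push_cast at this
    linarith
  refine div_le_of_le_mul₀ (by positivity) (by positivity) ?_
  simpa [mul_comm] using sum_le_card_mul_of_sum_sq_le_mul_sum (by positivity) hsq_rat

theorem average_degree_le_max_adjacent_sum_div_two
    {V : Type} [Fintype V] (G : SimpleGraph V) [DecidableRel G.Adj]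
    (hedge : ∃ u v, G.Adj u v) (m : ℕ)
    (hm : IsGreatest {k | ∃ u v, G.Adj u v ∧ G.degree u + G.degree v = k} m) :
    ((∑ v : V, G.degree v : ℚ)) / (Fintype.card V : ℚ) ≤ (m : ℚ) / 2 :=
  average_degree_le_max_adjacent_sum_div_two_general G m hm
end

section
/- Let S be a finite alphabet with a complementation, let V ⊆ S^d be a polybox code which does not contain a twin pair, and let w ∈ S^d with w ∉ V be covered by V (that is, w̌ ⊆ ⋃_{v∈V} v̌). Then |V| ≥ 5; moreover, if |V| = 5, then V is rigid, i.e. every polybox code W ⊆ S^d equivalent to V equals V. -/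
variable {S : Type}

/-!
A point of `(ES)^d` picks, in every coordinate, one letter out of each complementary pair. Counting
such points, the realization of a word `v` compatible with `u` fills the fraction
`2 ^ (-hammingDist u v)` of `ǔ`, so the words of a polybox code covering `ǔ` satisfy
`∑ 2 ^ (-hammingDist u v) = 1`; counting in the half of `ǔ` whose `a`-th coordinate contains a
letter `z` shows moreover that the words with `z` and with `z'` at `a` carry equal weight.

A word of the cover at distance one from `u` can be removed, after moving the words in conflict
with it onto `u` at that coordinate. Once all distances are at least two the sum forces four words,
and with exactly four of them the balance produces a twin pair.

For rigidity, an equivalent code `W` has as many words as `V`, and a word of `W` outside `V` is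
compatible with all five words of `V`. So `W` is disjoint from `V`, every word of either code is
covered by the other one, and has exactly three neighbours (words at distance two) in it. The
coordinates where `v₀ ∈ V` conflicts with the rest of `V` are exactly those where `v₀` differs
from each of its neighbours, and the neighbours of these are the three words of `V` agreeing with
`v₀` elsewhere. A fourth word of `V` is then a neighbour of none of the neighbours of `v₀`,
leaving it at most two neighbours.
-/

open Finset

namespace Polybox

variable {c : S → S} {d : ℕ}

section Arithmetic

variable {ι : Type*} {F : Finset ι} {k : ι → ℕ}

theorem inv_two_pow_le_of_le {m n : ℕ} (h : m ≤ n) : (2⁻¹ : ℚ) ^ n ≤ 2⁻¹ ^ m :=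
  pow_le_pow_of_le_one (by norm_num) (by norm_num) h

theorem four_le_card_of_sum_inv_two_pow_eq_one (hk : ∀ i ∈ F, 2 ≤ k i)
    (hsum : ∑ i ∈ F, (2⁻¹ : ℚ) ^ k i = 1) :
    4 ≤ F.card ∧ (F.card = 4 → ∀ i ∈ F, k i = 2) := by
  have hle : ∀ i ∈ F, (2⁻¹ : ℚ) ^ k i ≤ 4⁻¹ := fun i hi =>
    (inv_two_pow_le_of_le (hk i hi)).trans_eq (by norm_num)
  have hcard := sum_le_card_nsmul F _ _ hle
  rw [hsum, nsmul_eq_mul] at hcard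
  refine ⟨by exact_mod_cast (by linarith : (4 : ℚ) ≤ F.card), fun h4 => ?_⟩
  by_contra! ⟨i, hi, hki⟩
  have hlt : (2⁻¹ : ℚ) ^ k i < 4⁻¹ :=
    (inv_two_pow_le_of_le (by have := hk i hi; omega : 3 ≤ k i)).trans_lt (by norm_num)
  have := sum_lt_sum hle ⟨i, hi, hlt⟩
  rw [hsum, sum_const, h4] at this
  norm_num at this

theorem card_filter_eq_two_of_sum_inv_two_pow_eq_one (h5 : F.card = 5) (hk : ∀ i ∈ F, 2 ≤ k i)
    (hsum : ∑ i ∈ F, (2⁻¹ : ℚ) ^ k i = 1) : #{i ∈ F | k i = 2} = 3 := by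
  set A := F.filter (k · = 2)
  set B := F.filter (k · ≠ 2)
  have hAB : (A.card : ℚ) + B.card = 5 := by
    exact_mod_cast (card_filter_add_card_filter_not (s := F) (k · = 2)).trans h5
  have hA : ∑ i ∈ A, (2⁻¹ : ℚ) ^ k i = A.card * 4⁻¹ := by
    rw [sum_congr rfl (g := fun _ => 4⁻¹) fun i hi => by rw [(mem_filter.1 hi).2]; norm_num,
      sum_const, nsmul_eq_mul]
  have hsplit : ∑ i ∈ A, (2⁻¹ : ℚ) ^ k i + ∑ i ∈ B, (2⁻¹ : ℚ) ^ k i = 1 := by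
    rw [sum_filter_add_sum_filter_not, hsum]
  rw [hA] at hsplit
  have hB : ∑ i ∈ B, (2⁻¹ : ℚ) ^ k i ≤ B.card * 8⁻¹ := by
    refine (sum_le_card_nsmul B _ 8⁻¹ fun i hi => ?_).trans_eq (nsmul_eq_mul _ _)
    obtain ⟨hi, hki⟩ := mem_filter.1 hi
    exact (inv_two_pow_le_of_le (by have := hk i hi; omega : 3 ≤ k i)).trans_eq (by norm_num)
  have hBne : B.Nonempty := by
    by_contra hB0
    rw [not_nonempty_iff_eq_empty.1 hB0] at hsplit hAB
    simp only [sum_empty, card_empty, Nat.cast_zero, add_zero] at hsplit hAB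
    linarith
  have hBpos : 0 < ∑ i ∈ B, (2⁻¹ : ℚ) ^ k i := sum_pos (fun i _ => by positivity) hBne
  have h4 : A.card < 4 := by exact_mod_cast (by linarith : (A.card : ℚ) < 4)
  have h3 : 3 ≤ A.card := by exact_mod_cast (by linarith : (3 : ℚ) ≤ A.card)
  omega

end Arithmetic

section ESet

theorem mem_ESet_iff {B : Set S} : B ∈ ESet c ↔ ∀ s, (s ∈ B ↔ c s ∉ B) :=
  forall_congr' fun _ => xor_iff_iff_not

theorem ESet_nonempty (hinv : Function.Involutive c) (hfix : ∀ s, c s ≠ s) :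
    (ESet c).Nonempty := by
  have := WellOrderingRel.isWellOrder (α := S)
  refine ⟨{s | WellOrderingRel s (c s)}, mem_ESet_iff.2 fun s => ?_⟩
  simp only [Set.mem_ofPred_eq, hinv s]
  rcases trichotomous_of WellOrderingRel s (c s) with h | h | h
  · exact iff_of_true h (asymm h)
  · exact absurd h.symm (hfix s)
  · exact iff_of_false (asymm h) (not_not.2 h)

theorem symmDiff_pair_mem_ESet (hinv : Function.Involutive c) {B : Set S} (hB : B ∈ ESet c)
    (t : S) : symmDiff B {t, c t} ∈ ESet c := by
  rw [mem_ESet_iff] at hB ⊢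
  intro s
  have hP : c s ∈ ({t, c t} : Set S) ↔ s ∈ ({t, c t} : Set S) := by
    simp only [Set.mem_insert_iff, Set.mem_singleton_iff, hinv.eq_iff, hinv t]
    exact or_comm
  simp only [Set.mem_symmDiff, hP, hB s]
  tauto

def Consistent (c : S → S) (T : Finset S) : Prop := ∀ t ∈ T, c t ∉ T

theorem Consistent.mono {T T' : Finset S} (h : Consistent c T') (hT : T ⊆ T') :
    Consistent c T :=
  fun t ht hct => h t (hT ht) (hT hct)

theorem consistent_singleton (hfix : ∀ s, c s ≠ s) (s : S) : Consistent c {s} :=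
  fun t ht hct => hfix t ((mem_singleton.1 hct).trans (mem_singleton.1 ht).symm)

noncomputable def esCount (c : S → S) (T : Finset S) : ℕ :=
  {B | B ∈ ESet c ∧ ↑T ⊆ B}.ncard

variable [DecidableEq S]

theorem consistent_pair (hinv : Function.Involutive c) (hfix : ∀ s, c s ≠ s) {p z : S}
    (h : z ≠ c p) : Consistent c {p, z} := by
  intro t ht hct
  simp only [mem_insert, mem_singleton] at ht hct
  rcases ht with rfl | rfl <;> rcases hct with h' | h'
  exacts [hfix _ h', h h'.symm, h (by rw [← h', hinv]), hfix _ h']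

def letterFactor (c : S → S) (T : Finset S) (s : S) : ℚ :=
  if s ∈ T then 1 else if c s ∈ T then 0 else 2⁻¹

theorem letterFactor_pair (hinv : Function.Involutive c) (hfix : ∀ s, c s ≠ s) {p z : S}
    (hz : z ≠ p) (hz' : z ≠ c p) (x : S) :
    letterFactor c {p, z} x =
      (if x = z then 2 else if x = c z then 0 else 1) * letterFactor c {p} x := by
  have hcz : c z ≠ p := fun h => hz' (by rw [← h, hinv])
  unfold letterFactor
  by_cases hxz : x = z
  · subst hxz
    simp [hz, hcz]
  by_cases hxcz : x = c z
  · subst hxcz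
    simp [hinv z, hcz, hfix z]
  have : c x ≠ z := fun h => hxcz (by rw [← h, hinv])
  simp [hxz, hxcz, this]

variable [Finite S]

theorem esCount_insert (hinv : Function.Involutive c) {T : Finset S} {t : S}
    (hT : Consistent c (insert t T)) (ht : t ∉ T) :
    esCount c (insert t T) * 2 = esCount c T := by
  have hct : c t ∉ T := fun h => hT t (mem_insert_self t T) (mem_insert_of_mem h)
  set A : Set (Set S) := {B | B ∈ ESet c ∧ ↑T ⊆ B}
  set flip : Set S → Set S := fun B => symmDiff B {t, c t}
  have hflip : Function.Involutive flip := fun B => symmDiff_symmDiff_cancel_right _ _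
  have hsub : ∀ B, ↑T ⊆ flip B ↔ ↑T ⊆ B := fun B => by
    refine forall₂_congr fun s hs => ?_
    have : s ∉ ({t, c t} : Set S) := by
      rintro (rfl | rfl) <;> contradiction
    simp only [flip, Set.mem_symmDiff, this]
    tauto
  have hin : A ∩ {B | t ∈ B} = {B | B ∈ ESet c ∧ ↑(insert t T) ⊆ B} := by
    ext B
    simp only [A, Set.mem_inter_iff, Set.mem_ofPred_eq, coe_insert, Set.insert_subset_iff]
    tauto
  have hout : A \ {B | t ∈ B} = flip ⁻¹' (A ∩ {B | t ∈ B}) := by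
    ext B
    have hES : flip B ∈ ESet c ↔ B ∈ ESet c :=
      ⟨fun h => hflip B ▸ symmDiff_pair_mem_ESet hinv h t, fun h => symmDiff_pair_mem_ESet hinv h t⟩
    simp only [A, Set.mem_sdiff, Set.mem_inter_iff, Set.mem_preimage, Set.mem_ofPred_eq, hES,
      hsub]
    simp [flip, Set.mem_symmDiff]
  have hsplit := Set.ncard_inter_add_ncard_sdiff_eq_ncard A {B | t ∈ B}
  rw [hout, Set.ncard_preimage_of_injective_subset_range hflip.injective
    (by simp [hflip.surjective.range_eq]), hin] at hsplit
  rw [esCount, esCount, ← hsplit]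
  ring

theorem esCount_mul_two_pow {T : Finset S} (hinv : Function.Involutive c) (hT : Consistent c T) :
    esCount c T * 2 ^ T.card = esCount c ∅ := by
  induction T using Finset.induction_on with
  | empty => simp
  | insert t T ht ih =>
    rw [card_insert_of_notMem ht, pow_succ, mul_comm (2 ^ _), ← mul_assoc,
      esCount_insert hinv hT ht, ih (hT.mono (subset_insert t T))]

theorem esCount_pos (hinv : Function.Involutive c) (hfix : ∀ s, c s ≠ s) {T : Finset S}
    (hT : Consistent c T) : 0 < esCount c T := by
  have h0 : 0 < esCount c ∅ := by
    simpa [esCount] using (Set.ncard_pos (Set.toFinite _)).2 (ESet_nonempty hinv hfix)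
  rw [← esCount_mul_two_pow hinv hT] at h0
  exact Nat.pos_of_mul_pos_right h0

theorem exists_mem_ESet_superset (hinv : Function.Involutive c) (hfix : ∀ s, c s ≠ s)
    {T : Finset S} (hT : Consistent c T) : ∃ B ∈ ESet c, ↑T ⊆ B :=
  Set.nonempty_of_ncard_ne_zero (esCount_pos hinv hfix hT).ne'

theorem esCount_insert_eq_mul (hinv : Function.Involutive c) (hfix : ∀ s, c s ≠ s)
    {T : Finset S} (hT : Consistent c T) (s : S) :
    (esCount c (insert s T) : ℚ) = letterFactor c T s * esCount c T := by
  unfold letterFactor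
  split_ifs with hs hcs
  · rw [insert_eq_of_mem hs, one_mul]
  · have : {B | B ∈ ESet c ∧ ↑(insert s T) ⊆ B} = ∅ := by
      refine Set.eq_empty_of_forall_notMem fun B ⟨hB, hsub⟩ => ?_
      exact (mem_ESet_iff.1 hB s).1 (hsub (mem_insert_self s T))
        (hsub (mem_insert_of_mem hcs))
    rw [esCount, this, Set.ncard_empty, Nat.cast_zero, zero_mul]
  · have hcons : Consistent c (insert s T) := by
      intro t ht hct
      rcases mem_insert.1 ht with rfl | ht
      · rcases mem_insert.1 hct with h | h
        exacts [hfix t h, hcs h]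
      · rcases mem_insert.1 hct with h | h
        · exact hcs (h ▸ (hinv t).symm ▸ ht)
        · exact hT t ht h
    have := esCount_insert hinv hcons hs
    have hq : (esCount c (insert s T) : ℚ) * 2 = esCount c T := by exact_mod_cast this
    linarith

end ESet

section Region

def Region (c : S → S) (L : Fin d → Finset S) : Set (Fin d → Set S) :=
  {x | ∀ i, x i ∈ ESet c ∧ ↑(L i) ⊆ x i}

theorem region_singleton (v : Fin d → S) : Region c (fun i => {v i}) = Realize c v := by
  ext x
  simp [Region, Realize, ELetter]

theorem region_mono {L L' : Fin d → Finset S} (h : ∀ i, L i ⊆ L' i) :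
    Region c L' ⊆ Region c L :=
  fun _ hx i => ⟨(hx i).1, (coe_subset.2 (h i)).trans (hx i).2⟩

theorem ncard_region (L : Fin d → Finset S) : (Region c L).ncard = ∏ i, esCount c (L i) := by
  rw [← Nat.card_coe_set_eq]
  exact (Nat.card_congr (Equiv.subtypePiEquivPi (β := fun _ : Fin d => Set S)
    (p := fun i x => x ∈ ESet c ∧ ↑(L i) ⊆ x))).trans Nat.card_pi

theorem realize_subset_realizeSet {V : Set (Fin d → S)} {v : Fin d → S} (hv : v ∈ V) :
    Realize c v ⊆ RealizeSet c V :=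
  Set.subset_biUnion_of_mem (u := Realize c) hv

theorem disjoint_realize_of_dicho {u v : Fin d → S} (h : Dicho c u v) :
    Disjoint (Realize c u) (Realize c v) := by
  obtain ⟨j, hj⟩ := h
  refine Set.disjoint_left.2 fun x hu hv => ?_
  exact (mem_ESet_iff.1 (hu j).1 (u j)).1 (hu j).2 (hj ▸ (hv j).2)

variable [DecidableEq S]

theorem region_inter_realize (L : Fin d → Finset S) (v : Fin d → S) :
    Region c L ∩ Realize c v = Region c (fun i => insert (v i) (L i)) := by
  ext x
  simp only [Region, Realize, ELetter, Set.mem_inter_iff, Set.mem_ofPred_eq, coe_insert,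
    Set.insert_subset_iff]
  grind

def weight (c : S → S) (L : Fin d → Finset S) (v : Fin d → S) : ℚ :=
  ∏ i, letterFactor c (L i) (v i)

theorem weight_singleton (hinv : Function.Involutive c) {u v : Fin d → S} (h : ¬Dicho c u v) :
    weight c (fun i => {u i}) v = 2⁻¹ ^ hammingDist u v := by
  have hfac : ∀ i, letterFactor c {u i} (v i) = if u i ≠ v i then 2⁻¹ else 1 := fun i => by
    have : c (v i) ≠ u i := fun h' => h ⟨i, by rw [← h', hinv]⟩
    by_cases hi : u i = v i <;> simp [letterFactor, hi, this, eq_comm]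
  simp only [weight, hfac, prod_ite, prod_const, one_pow, mul_one]
  rfl

theorem weight_update_pair (hinv : Function.Involutive c) (hfix : ∀ s, c s ≠ s)
    {u : Fin d → S} {a : Fin d} {z : S} (hz : z ≠ u a) (hz' : z ≠ c (u a)) (v : Fin d → S) :
    weight c (Function.update (fun i => {u i}) a {u a, z}) v =
      (if v a = z then 2 else if v a = c z then 0 else 1) * weight c (fun i => {u i}) v := by
  set g := fun i => letterFactor c {u i} (v i)
  have hprod : ∀ b, ∏ i, Function.update g a b i = b * ∏ i ∈ univ \ {a}, g i :=
    fun b => prod_update_of_mem (mem_univ a) g b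
  have hL : weight c (Function.update (fun i => {u i}) a {u a, z}) v =
      ∏ i, Function.update g a (letterFactor c {u a, z} (v a)) i :=
    prod_congr rfl fun i _ => Function.apply_update (fun i T => letterFactor c T (v i)) _ a _ i
  have hg : ∏ i, g i = g a * ∏ i ∈ univ \ {a}, g i := by
    simpa using hprod (g a)
  rw [hL, hprod, show weight c (fun i => {u i}) v = ∏ i, g i from rfl, hg,
    letterFactor_pair hinv hfix hz hz']
  simp only [g]
  ring

variable [Finite S]

theorem ncard_region_inter_realizeSet (hinv : Function.Involutive c) (hfix : ∀ s, c s ≠ s)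
    {L : Fin d → Finset S} (hL : ∀ i, Consistent c (L i)) {F : Finset (Fin d → S)}
    (hF : PolyboxCode c (F : Set (Fin d → S))) :
    ((Region c L ∩ RealizeSet c ↑F).ncard : ℚ) = (∑ v ∈ F, weight c L v) * (Region c L).ncard := by
  have hdisj : (F : Set (Fin d → S)).PairwiseDisjoint (fun v => Region c L ∩ Realize c v) :=
    fun u hu v hv huv => (disjoint_realize_of_dicho (hF u hu v hv huv)).mono
      Set.inter_subset_right Set.inter_subset_right
  rw [RealizeSet, Set.inter_iUnion₂, Set.Finite.ncard_biUnion F.finite_toSet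
    (fun _ _ => Set.toFinite _) hdisj, finsum_mem_coe_finset, Nat.cast_sum, sum_mul]
  refine sum_congr rfl fun v _ => ?_
  rw [region_inter_realize, ncard_region, ncard_region, weight]
  push_cast
  rw [← prod_mul_distrib]
  exact prod_congr rfl fun i _ => esCount_insert_eq_mul hinv hfix (hL i) (v i)

theorem ncard_region_pos (hinv : Function.Involutive c) (hfix : ∀ s, c s ≠ s)
    {L : Fin d → Finset S} (hL : ∀ i, Consistent c (L i)) : 0 < (Region c L).ncard := by
  rw [ncard_region]
  exact prod_pos fun i _ => esCount_pos hinv hfix (hL i)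

theorem sum_weight_eq_one (hinv : Function.Involutive c) (hfix : ∀ s, c s ≠ s)
    {L : Fin d → Finset S} (hL : ∀ i, Consistent c (L i)) {F : Finset (Fin d → S)}
    (hF : PolyboxCode c (F : Set (Fin d → S))) (hcov : Region c L ⊆ RealizeSet c ↑F) :
    ∑ v ∈ F, weight c L v = 1 := by
  have h := ncard_region_inter_realizeSet hinv hfix hL hF
  rw [Set.inter_eq_self_of_subset_left hcov] at h
  have hpos : (0 : ℚ) < (Region c L).ncard := by exact_mod_cast ncard_region_pos hinv hfix hL
  exact (mul_eq_right₀ hpos.ne').1 h.symm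

theorem card_eq_of_equivCodes (hinv : Function.Involutive c) (hfix : ∀ s, c s ≠ s)
    {F G : Finset (Fin d → S)} (hF : PolyboxCode c (F : Set (Fin d → S)))
    (hG : PolyboxCode c (G : Set (Fin d → S))) (h : EquivCodes c (F : Set (Fin d → S)) G) :
    F.card = G.card := by
  have hL : ∀ _ : Fin d, Consistent c (∅ : Finset S) := fun _ _ ht => absurd ht (notMem_empty _)
  have hw : ∀ v : Fin d → S, weight c (fun _ => ∅) v = 2⁻¹ ^ d := fun v => by
    simp [weight, letterFactor]
  have hFG := ncard_region_inter_realizeSet hinv hfix hL hF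
  rw [show RealizeSet c (F : Set (Fin d → S)) = RealizeSet c G from h,
    ncard_region_inter_realizeSet hinv hfix hL hG] at hFG
  simp only [hw, sum_const, nsmul_eq_mul] at hFG
  have hpos : (0 : ℚ) < 2⁻¹ ^ d * (Region c fun _ : Fin d => ∅).ncard := by
    have := ncard_region_pos hinv hfix hL
    positivity
  rw [mul_assoc, mul_assoc] at hFG
  exact_mod_cast mul_right_cancel₀ hpos.ne' hFG.symm

/-- Replacing the `a`-th coordinate of `x` by a member of `ES` containing `u a` and `c (w a)` gives
a point of `ǔ` outside `w̌`. -/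
theorem exists_mem_realize_update (hinv : Function.Involutive c) (hfix : ∀ s, c s ≠ s)
    {V : Set (Fin d → S)} {u w : Fin d → S} {a : Fin d} (hcov : Realize c u ⊆ RealizeSet c V)
    (hwa : u a ≠ w a) {x : Fin d → Set S} (hx : x ∈ Realize c u) :
    ∃ v ∈ V, v ≠ w ∧ x ∈ Realize c (Function.update v a (u a)) := by
  obtain ⟨B, hB, hBsub⟩ := exists_mem_ESet_superset hinv hfix
    (consistent_pair hinv hfix (p := u a) (z := c (w a)) fun e => hwa (hinv.injective e).symm)
  have hx' : Function.update x a B ∈ Realize c u := fun i => by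
    by_cases hi : i = a
    · subst hi
      simpa using ⟨hB, hBsub (by simp)⟩
    · simpa [hi] using hx i
  obtain ⟨v, hv, hxv⟩ := Set.mem_iUnion₂.1 (hcov hx')
  refine ⟨v, hv, ?_, fun i => ?_⟩
  · rintro rfl
    have hva : v a ∈ B := by simpa using (hxv a).2
    exact (mem_ESet_iff.1 hB (v a)).1 hva (hBsub (by simp))
  · by_cases hi : i = a
    · subst hi
      simpa using hx i
    · simpa [hi] using hxv i

end Region

section Words

theorem Dicho.symm (hinv : Function.Involutive c) {u v : Fin d → S} (h : Dicho c u v) :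
    Dicho c v u :=
  let ⟨j, hj⟩ := h
  ⟨j, by rw [hj, hinv]⟩

theorem dicho_update_iff (hfix : ∀ s, c s ≠ s) {v v' : Fin d → S} {a : Fin d}
    (h : v a = v' a) (s : S) :
    Dicho c (Function.update v a s) (Function.update v' a s) ↔ Dicho c v v' := by
  refine exists_congr fun j => ?_
  by_cases hj : j = a
  · subst hj
    simp only [Function.update_self, h]
    exact iff_of_false (fun e => hfix s e.symm) (fun e => hfix _ e.symm)
  · simp only [Function.update_of_ne hj]

theorem twinPair_update_iff (hfix : ∀ s, c s ≠ s) {v v' : Fin d → S} {a : Fin d}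
    (h : v a = v' a) (s : S) :
    TwinPair c (Function.update v a s) (Function.update v' a s) ↔ TwinPair c v v' := by
  refine exists_congr fun j => ?_
  by_cases hj : j = a
  · subst hj
    simp only [Function.update_self, h]
    exact iff_of_false (fun e => hfix s e.1.symm) (fun e => hfix _ e.1.symm)
  · refine and_congr (by simp only [Function.update_of_ne hj]) (forall₂_congr fun i _ => ?_)
    by_cases hi : i = a
    · subst hi
      simp [h]
    · simp only [Function.update_of_ne hi]

theorem not_dicho_update_self (hfix : ∀ s, c s ≠ s) {u v : Fin d → S} (h : ¬Dicho c u v)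
    (a : Fin d) : ¬Dicho c u (Function.update v a (u a)) := by
  rintro ⟨j, hj⟩
  by_cases hja : j = a
  · subst hja
    exact hfix _ (by simpa using hj.symm)
  · exact h ⟨j, by simpa [hja] using hj⟩

variable [DecidableEq S]

instance (u v : Fin d → S) : Decidable (Dicho c u v) :=
  inferInstanceAs (Decidable (∃ j, v j = c (u j)))

def diffSet (u v : Fin d → S) : Finset (Fin d) := {i | u i ≠ v i}

theorem card_diffSet (u v : Fin d → S) : (diffSet u v).card = hammingDist u v := rfl

theorem mem_diffSet {u v : Fin d → S} {i : Fin d} : i ∈ diffSet u v ↔ u i ≠ v i := by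
  simp [diffSet]

theorem diffSet_comm (u v : Fin d → S) : diffSet u v = diffSet v u := by
  simp [diffSet, ne_comm]

theorem eq_of_notMem_diffSet {u v : Fin d → S} {i : Fin d} (h : i ∉ diffSet u v) : u i = v i :=
  not_not.1 (mt mem_diffSet.2 h)

theorem diffSet_eq_of_subset {u v : Fin d → S} {T : Finset (Fin d)} (hT : T ⊆ diffSet u v)
    (hcard : hammingDist u v ≤ T.card) : diffSet u v = T :=
  (eq_of_subset_of_card_le hT hcard).symm

theorem mem_diffSet_of_eq_compl {u v v' : Fin d → S} (hv' : ¬Dicho c u v') {j : Fin d}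
    (hj : v' j = c (v j)) : j ∈ diffSet u v :=
  mem_diffSet.2 fun h => hv' ⟨j, h ▸ hj⟩

theorem twinPair_of_hammingDist_eq_two (hinv : Function.Involutive c) (hfix : ∀ s, c s ≠ s)
    {u v v' : Fin d → S} (hv : ¬Dicho c u v) (hv' : ¬Dicho c u v') (hd : Dicho c v v')
    (h2 : hammingDist u v = 2) (h2' : hammingDist u v' = 2) {a : Fin d} (ha : a ∈ diffSet u v)
    (hva : v' a = v a) : TwinPair c v v' := by
  obtain ⟨j, hj⟩ := hd
  have hja : j ≠ a := by
    rintro rfl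
    exact hfix _ (hva ▸ hj).symm
  have hpair : ∀ {w}, hammingDist u w = 2 → a ∈ diffSet u w → j ∈ diffSet u w →
      diffSet u w = {a, j} := fun hw2 ha hj =>
    diffSet_eq_of_subset (insert_subset ha (singleton_subset_iff.2 hj))
      (by rw [card_pair hja.symm]; omega)
  have hD := hpair h2 ha (mem_diffSet_of_eq_compl hv' hj)
  have hD' := hpair h2' (mem_diffSet.2 (hva ▸ mem_diffSet.1 ha))
    (mem_diffSet_of_eq_compl hv (by rw [hj, hinv]))
  refine ⟨j, hj, fun i hij => ?_⟩
  by_cases hia : i = a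
  · exact hia ▸ hva
  · have hi : i ∉ ({a, j} : Finset (Fin d)) := by simp [hia, hij]
    exact (eq_of_notMem_diffSet (hD'.symm ▸ hi)).symm.trans (eq_of_notMem_diffSet (hD.symm ▸ hi))

end Words

structure IsCover (c : S → S) (u : Fin d → S) (F : Finset (Fin d → S)) : Prop where
  code : PolyboxCode c (F : Set (Fin d → S))
  compat : ∀ v ∈ F, ¬Dicho c u v
  covers : Realize c u ⊆ RealizeSet c ↑F

namespace IsCover

variable [DecidableEq S] [Finite S] {u : Fin d → S} {F : Finset (Fin d → S)}

theorem sum_eq_one (h : IsCover c u F) (hinv : Function.Involutive c) (hfix : ∀ s, c s ≠ s) :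
    ∑ v ∈ F, (2⁻¹ : ℚ) ^ hammingDist u v = 1 := by
  rw [← sum_weight_eq_one hinv hfix (fun i => consistent_singleton hfix (u i)) h.code
    (region_singleton u ▸ h.covers)]
  exact sum_congr rfl fun v hv => (weight_singleton hinv (h.compat v hv)).symm

/-- Compare the weights of `F` in `ǔ` and in its half where the `a`-th coordinate contains `z`:
there the words with `z` at `a` count double and those with `c z` not at all. -/
theorem sum_filter_eq (h : IsCover c u F) (hinv : Function.Involutive c) (hfix : ∀ s, c s ≠ s)
    {a : Fin d} {z : S} (hz : z ≠ u a) (hz' : z ≠ c (u a)) :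
    ∑ v ∈ F with v a = z, (2⁻¹ : ℚ) ^ hammingDist u v
      = ∑ v ∈ F with v a = c z, (2⁻¹ : ℚ) ^ hammingDist u v := by
  set L := Function.update (fun i => ({u i} : Finset S)) a {u a, z}
  have hL : ∀ i, Consistent c (L i) := by
    intro i
    by_cases hi : i = a
    · subst hi
      simpa [L] using consistent_pair hinv hfix hz'
    · simpa [L, hi] using consistent_singleton hfix (u i)
  have hcov : Region c L ⊆ RealizeSet c ↑F := by
    refine (region_mono fun i => ?_).trans (region_singleton u ▸ h.covers)
    by_cases hi : i = a
    · subst hi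
      simp [L]
    · simp [L, hi]
  have hsum := sum_weight_eq_one hinv hfix hL h.code hcov
  have hsplit : ∀ v ∈ F, weight c L v = (2⁻¹ : ℚ) ^ hammingDist u v +
      ((if v a = z then (2⁻¹ : ℚ) ^ hammingDist u v else 0) -
        (if v a = c z then (2⁻¹ : ℚ) ^ hammingDist u v else 0)) := fun v hv => by
    rw [weight_update_pair hinv hfix hz hz', weight_singleton hinv (h.compat v hv)]
    have : ¬(v a = z ∧ v a = c z) := fun ⟨h1, h2⟩ => hfix z (h2.symm.trans h1)
    split_ifs <;> first | exact absurd ⟨‹v a = z›, ‹v a = c z›⟩ this | ring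
  rw [sum_congr rfl hsplit, sum_add_distrib, sum_sub_distrib, ← sum_filter, ← sum_filter,
    h.sum_eq_one hinv hfix] at hsum
  linarith

end IsCover

structure IsTwinFreeCover (c : S → S) (u : Fin d → S) (F : Finset (Fin d → S)) : Prop
    extends IsCover c u F where
  twinFree : NoTwinPair c (F : Set (Fin d → S))
  notMem : u ∉ F

section TwinFreeCover

variable [DecidableEq S]

theorem isTwinFreeCover_filter {F : Finset (Fin d → S)} (hF : PolyboxCode c (F : Set (Fin d → S)))
    (hFt : NoTwinPair c (F : Set (Fin d → S))) {u : Fin d → S} (hu : u ∉ F)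
    (hcov : Realize c u ⊆ RealizeSet c ↑F) : IsTwinFreeCover c u {v ∈ F | ¬Dicho c u v} where
  code v hv v' hv' := hF v (mem_filter.1 hv).1 v' (mem_filter.1 hv').1
  compat v hv := (mem_filter.1 hv).2
  covers x hx := by
    obtain ⟨v, hv, hxv⟩ := Set.mem_iUnion₂.1 (hcov hx)
    refine Set.mem_iUnion₂.2 ⟨v, mem_filter.2 ⟨hv, fun hd => ?_⟩, hxv⟩
    exact Set.disjoint_left.1 (disjoint_realize_of_dicho hd) hx hxv
  twinFree v hv v' hv' := hFt v (mem_filter.1 hv).1 v' (mem_filter.1 hv').1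
  notMem hu' := hu (mem_filter.1 hu').1

namespace IsTwinFreeCover

variable [Finite S] {u : Fin d → S} {F : Finset (Fin d → S)}

/-- A letter of `v₁` outside `u` occurs in no other word (they would form a twin pair), so by
balance its complement occurs in exactly one word; but each of the three other words carries one
of these two complements. -/
theorem false_of_card_eq_four (h : IsTwinFreeCover c u F) (hinv : Function.Involutive c)
    (hfix : ∀ s, c s ≠ s) (h4 : F.card = 4) (h2 : ∀ v ∈ F, hammingDist u v = 2) : False := by
  obtain ⟨v₁, hv₁⟩ : F.Nonempty := card_pos.1 (by omega)
  set D := diffSet u v₁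
  have hsame : ∀ i ∈ D, F.filter (· i = v₁ i) = {v₁} := fun i hi => by
    refine eq_singleton_iff_unique_mem.2 ⟨mem_filter.2 ⟨hv₁, rfl⟩, fun v hv => ?_⟩
    obtain ⟨hv, hvi⟩ := mem_filter.1 hv
    by_contra hne
    exact h.twinFree v₁ hv₁ v hv <| twinPair_of_hammingDist_eq_two hinv hfix (h.compat v₁ hv₁)
      (h.compat v hv) (h.code v₁ hv₁ v hv (Ne.symm hne)) (h2 v₁ hv₁) (h2 v hv) hi hvi
  have hcompl : ∀ i ∈ D, (F.filter (· i = c (v₁ i))).card = 1 := fun i hi => by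
    have hbal := h.sum_filter_eq hinv hfix (mem_diffSet.1 hi).symm
      (fun he => h.compat v₁ hv₁ ⟨i, he⟩)
    have hw : ∀ v ∈ F, (2⁻¹ : ℚ) ^ hammingDist u v = 4⁻¹ := fun v hv => by
      rw [h2 v hv]; norm_num
    rw [sum_congr rfl fun v hv => hw v (mem_filter.1 hv).1,
      sum_congr rfl fun v hv => hw v (mem_filter.1 hv).1, sum_const, sum_const, hsame i hi,
      card_singleton] at hbal
    have : ((F.filter (· i = c (v₁ i))).card : ℚ) = 1 := by
      simpa using hbal.symm
    exact_mod_cast this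
  have hcover : F.erase v₁ ⊆ D.biUnion fun i => F.filter (· i = c (v₁ i)) := fun v hv => by
    obtain ⟨hne, hv⟩ := mem_erase.1 hv
    obtain ⟨j, hj⟩ := h.code v₁ hv₁ v hv (Ne.symm hne)
    exact mem_biUnion.2 ⟨j, mem_diffSet_of_eq_compl (h.compat v hv) hj, mem_filter.2 ⟨hv, hj⟩⟩
  have := (card_le_card hcover).trans card_biUnion_le
  rw [sum_congr rfl hcompl, card_erase_of_mem hv₁, h4, sum_const, card_diffSet, h2 v₁ hv₁] at this
  simp at this

/-- Removing a word at distance one from `u` and moving the words that conflict with it onto `u`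
at that coordinate gives a smaller twin-free cover of `u`. -/
theorem exists_card_lt (h : IsTwinFreeCover c u F) (hinv : Function.Involutive c)
    (hfix : ∀ s, c s ≠ s) {w : Fin d → S} (hw : w ∈ F) (h1 : hammingDist u w = 1) :
    ∃ F', IsTwinFreeCover c u F' ∧ F'.card < F.card := by
  obtain ⟨a, ha⟩ : ∃ a, diffSet u w = {a} := card_eq_one.1 h1
  have hoff : ∀ i ≠ a, u i = w i := fun i hi => eq_of_notMem_diffSet (by simpa [ha] using hi)
  have hwa : u a ≠ w a := mem_diffSet.1 (by simp [ha])
  have hcol : ∀ v ∈ F.erase w, v a = c (w a) := fun v hv => by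
    obtain ⟨hne, hv⟩ := mem_erase.1 hv
    obtain ⟨j, hj⟩ := h.code w hw v hv (Ne.symm hne)
    have : j ∈ diffSet u w := mem_diffSet_of_eq_compl (h.compat v hv) hj
    rw [ha, mem_singleton] at this
    exact this ▸ hj
  have hsame : ∀ v ∈ F.erase w, ∀ v' ∈ F.erase w, v a = v' a := fun v hv v' hv' => by
    rw [hcol v hv, hcol v' hv']
  set move : (Fin d → S) → Fin d → S := fun v => Function.update v a (u a)
  refine ⟨(F.erase w).image move, ⟨⟨?_, ?_, ?_⟩, ?_, ?_⟩,
    (card_image_le).trans_lt (card_erase_lt_of_mem hw)⟩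
  · intro v' hv' x' hx' hne
    obtain ⟨v, hv, rfl⟩ := mem_image.1 hv'
    obtain ⟨x, hx, rfl⟩ := mem_image.1 hx'
    exact (dicho_update_iff hfix (hsame v hv x hx) _).2 <|
      h.code v (mem_of_mem_erase hv) x (mem_of_mem_erase hx) fun e => hne (e ▸ rfl)
  · intro v' hv'
    obtain ⟨v, hv, rfl⟩ := mem_image.1 hv'
    exact not_dicho_update_self hfix (h.compat v (mem_of_mem_erase hv)) a
  · intro x hx
    obtain ⟨v, hv, hvw, hxv⟩ := exists_mem_realize_update hinv hfix h.covers hwa hx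
    exact Set.mem_iUnion₂.2 ⟨move v, mem_image_of_mem _ (mem_erase.2 ⟨hvw, hv⟩), hxv⟩
  · intro v' hv' x' hx'
    obtain ⟨v, hv, rfl⟩ := mem_image.1 hv'
    obtain ⟨x, hx, rfl⟩ := mem_image.1 hx'
    rw [twinPair_update_iff hfix (hsame v hv x hx)]
    exact h.twinFree v (mem_of_mem_erase hv) x (mem_of_mem_erase hx)
  · intro hu
    obtain ⟨v, hv, hvu⟩ := mem_image.1 hu
    refine h.twinFree w hw v (mem_of_mem_erase hv) ⟨a, hcol v hv, fun i hi => ?_⟩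
    rw [← hoff i hi, ← hvu]
    simp [move, hi]

theorem five_le_card (h : IsTwinFreeCover c u F) (hinv : Function.Involutive c)
    (hfix : ∀ s, c s ≠ s) : 5 ≤ F.card := by
  induction hn : F.card using Nat.strong_induction_on generalizing F with
  | _ n ih =>
  by_cases h1 : ∃ v ∈ F, hammingDist u v = 1
  · obtain ⟨v, hv, hv1⟩ := h1
    obtain ⟨F', h', hlt⟩ := h.exists_card_lt hinv hfix hv hv1
    exact (ih _ (hn ▸ hlt) h' rfl).trans (hn ▸ hlt).le
  have h2 : ∀ v ∈ F, 2 ≤ hammingDist u v := fun v hv => by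
    have := hammingDist_pos.2 (ne_of_mem_of_not_mem hv h.notMem).symm
    have : hammingDist u v ≠ 1 := fun e => h1 ⟨v, hv, e⟩
    omega
  obtain ⟨h4, h4eq⟩ := four_le_card_of_sum_inv_two_pow_eq_one h2 (h.sum_eq_one hinv hfix)
  rcases h4.eq_or_lt with h4 | h5
  · exact (h.false_of_card_eq_four hinv hfix (hn ▸ h4.symm) (h4eq (hn ▸ h4.symm))).elim
  · exact hn ▸ h5

theorem two_le_hammingDist (h : IsTwinFreeCover c u F) (hinv : Function.Involutive c)
    (hfix : ∀ s, c s ≠ s) (h5 : F.card ≤ 5) {v : Fin d → S} (hv : v ∈ F) :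
    2 ≤ hammingDist u v := by
  have := hammingDist_pos.2 (ne_of_mem_of_not_mem hv h.notMem).symm
  by_contra! hlt
  obtain ⟨F', h', hlt'⟩ := h.exists_card_lt hinv hfix hv (by omega)
  have := h'.five_le_card hinv hfix
  omega

end IsTwinFreeCover

variable [Finite S]

theorem forall_not_dicho_of_card_le_five (hinv : Function.Involutive c) (hfix : ∀ s, c s ≠ s)
    {F : Finset (Fin d → S)} (hF : PolyboxCode c (F : Set (Fin d → S)))
    (hFt : NoTwinPair c (F : Set (Fin d → S))) (h5 : F.card ≤ 5) {u : Fin d → S} (hu : u ∉ F)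
    (hcov : Realize c u ⊆ RealizeSet c ↑F) : ∀ v ∈ F, ¬Dicho c u v := by
  have := (isTwinFreeCover_filter hF hFt hu hcov).five_le_card hinv hfix
  exact card_filter_eq_iff.1 (le_antisymm (card_filter_le _ _) (by omega))

end TwinFreeCover

section MutualCover

variable [DecidableEq S]

structure MutualCover (c : S → S) (A B : Finset (Fin d → S)) : Prop where
  coverA : ∀ b ∈ B, IsCover c b A
  coverB : ∀ a ∈ A, IsCover c a B
  two_le_dist : ∀ a ∈ A, ∀ b ∈ B, 2 ≤ hammingDist a b
  cardA : A.card = 5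
  cardB : B.card = 5

def conflictSet (c : S → S) (A : Finset (Fin d → S)) (a₀ : Fin d → S) : Finset (Fin d) :=
  {j | ∃ a ∈ A, a j = c (a₀ j)}

namespace MutualCover

variable {A B : Finset (Fin d → S)} {a₀ : Fin d → S}

theorem symm (h : MutualCover c A B) : MutualCover c B A :=
  ⟨h.coverB, h.coverA, fun b hb a ha => hammingDist_comm a b ▸ h.two_le_dist a ha b hb,
    h.cardB, h.cardA⟩

theorem conflictSet_subset_diffSet (h : MutualCover c A B) {b : Fin d → S} (hb : b ∈ B) :
    conflictSet c A a₀ ⊆ diffSet a₀ b := fun j hj => by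
  obtain ⟨a, ha, haj⟩ := (mem_filter.1 hj).2
  rw [diffSet_comm]
  exact mem_diffSet_of_eq_compl ((h.coverA b hb).compat a ha) haj

theorem mem_conflictSet_of_ne (h : MutualCover c A B) (ha₀ : a₀ ∈ A) {a : Fin d → S}
    (ha : a ∈ A) (hne : a ≠ a₀) : ∃ j ∈ conflictSet c A a₀, a j = c (a₀ j) := by
  obtain ⟨b, hb⟩ := card_pos.1 (by rw [h.cardB]; norm_num : 0 < B.card)
  obtain ⟨j, hj⟩ := (h.coverA b hb).code a₀ ha₀ a ha (Ne.symm hne)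
  exact ⟨j, mem_filter.2 ⟨mem_univ j, a, ha, hj⟩, hj⟩

theorem conflictSet_nonempty (h : MutualCover c A B) (ha₀ : a₀ ∈ A) :
    (conflictSet c A a₀).Nonempty := by
  obtain ⟨a, ha, hne⟩ := exists_mem_ne (by rw [h.cardA]; norm_num : 1 < A.card) a₀
  obtain ⟨j, hj, -⟩ := h.mem_conflictSet_of_ne ha₀ ha hne
  exact ⟨j, hj⟩

variable [Finite S]

theorem card_near (h : MutualCover c A B) (hinv : Function.Involutive c) (hfix : ∀ s, c s ≠ s)
    {b : Fin d → S} (hb : b ∈ B) : #{a ∈ A | hammingDist b a = 2} = 3 :=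
  card_filter_eq_two_of_sum_inv_two_pow_eq_one h.cardA
    (fun a ha => hammingDist_comm a b ▸ h.two_le_dist a ha b hb)
    ((h.coverA b hb).sum_eq_one hinv hfix)

theorem exists_near (h : MutualCover c A B) (hinv : Function.Involutive c) (hfix : ∀ s, c s ≠ s)
    (ha₀ : a₀ ∈ A) : ∃ q ∈ B, hammingDist a₀ q = 2 := by
  have := h.symm.card_near hinv hfix ha₀
  obtain ⟨q, hq⟩ := card_pos.1 (by omega : 0 < #{b ∈ B | hammingDist a₀ b = 2})
  exact ⟨q, (mem_filter.1 hq).1, (mem_filter.1 hq).2⟩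

theorem card_conflictSet_le_two (h : MutualCover c A B) (hinv : Function.Involutive c)
    (hfix : ∀ s, c s ≠ s) (ha₀ : a₀ ∈ A) : (conflictSet c A a₀).card ≤ 2 := by
  obtain ⟨q, hq, hq2⟩ := h.exists_near hinv hfix ha₀
  exact (card_le_card (h.conflictSet_subset_diffSet hq)).trans_eq hq2

/-- If every other word of `A` conflicted with `a₀` at the single coordinate `j`, balance at `j`
inside `b̌` would make `a₀` fill half of `b̌`, i.e. put it at distance one from `b`. -/
theorem card_conflictSet_ne_one (h : MutualCover c A B) (hinv : Function.Involutive c)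
    (hfix : ∀ s, c s ≠ s) (ha₀ : a₀ ∈ A) : (conflictSet c A a₀).card ≠ 1 := by
  intro h1
  obtain ⟨j, hJ⟩ := card_eq_one.1 h1
  obtain ⟨b, hb⟩ := card_pos.1 (by rw [h.cardB]; norm_num : 0 < B.card)
  have hrest : ∀ a ∈ A, a ≠ a₀ → a j = c (a₀ j) := fun a ha hne => by
    obtain ⟨j', hj', hj'c⟩ := h.mem_conflictSet_of_ne ha₀ ha hne
    rw [hJ, mem_singleton] at hj'
    exact hj' ▸ hj'c
  have hb' := h.coverA b hb
  have hjb : a₀ j ≠ b j :=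
    mem_diffSet.1 (h.conflictSet_subset_diffSet hb (hJ ▸ mem_singleton_self j))
  have hbal := hb'.sum_filter_eq hinv hfix hjb fun e => hb'.compat a₀ ha₀ ⟨j, e⟩
  have hsame : A.filter (· j = a₀ j) = {a₀} := by
    refine eq_singleton_iff_unique_mem.2 ⟨mem_filter.2 ⟨ha₀, rfl⟩, fun a ha => ?_⟩
    by_contra hne
    exact hfix _ ((hrest a (mem_filter.1 ha).1 hne).symm.trans (mem_filter.1 ha).2)
  have hcompl : A.filter (· j = c (a₀ j)) = A.erase a₀ := by
    ext a
    simp only [mem_filter, mem_erase]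
    exact ⟨fun ⟨ha, haj⟩ => ⟨by rintro rfl; exact hfix _ haj.symm, ha⟩,
      fun ⟨hne, ha⟩ => ⟨ha, hrest a ha hne⟩⟩
  rw [hsame, hcompl, sum_singleton] at hbal
  have hsum := hb'.sum_eq_one hinv hfix
  rw [← add_sum_erase A _ ha₀, ← hbal] at hsum
  have hle : (2⁻¹ : ℚ) ^ hammingDist b a₀ ≤ 2⁻¹ ^ 2 :=
    inv_two_pow_le_of_le (hammingDist_comm a₀ b ▸ h.two_le_dist a₀ ha₀ b hb)
  norm_num at hle
  linarith

theorem card_conflictSet (h : MutualCover c A B) (hinv : Function.Involutive c)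
    (hfix : ∀ s, c s ≠ s) (ha₀ : a₀ ∈ A) : (conflictSet c A a₀).card = 2 := by
  have := h.card_conflictSet_le_two hinv hfix ha₀
  have := (h.conflictSet_nonempty ha₀).card_pos
  have := h.card_conflictSet_ne_one hinv hfix ha₀
  omega

theorem conflictSet_eq_diffSet (h : MutualCover c A B) (hinv : Function.Involutive c)
    (hfix : ∀ s, c s ≠ s) (ha₀ : a₀ ∈ A) {q : Fin d → S} (hq : q ∈ B)
    (h2 : hammingDist a₀ q = 2) : conflictSet c A a₀ = diffSet a₀ q :=
  (diffSet_eq_of_subset (h.conflictSet_subset_diffSet hq)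
    (by rw [h2, h.card_conflictSet hinv hfix ha₀])).symm

theorem filter_near_eq (h : MutualCover c A B) (hinv : Function.Involutive c)
    (hfix : ∀ s, c s ≠ s) (ha₀ : a₀ ∈ A) {q : Fin d → S} (hq : q ∈ B)
    (h2 : hammingDist a₀ q = 2) :
    A.filter (hammingDist q · = 2) = A.filter fun a => ∀ i ∉ conflictSet c A a₀, a i = a₀ i := by
  have hJ := h.conflictSet_eq_diffSet hinv hfix ha₀ hq h2
  have hq₀ : ∀ i ∉ conflictSet c A a₀, q i = a₀ i := fun i hi =>
    (eq_of_notMem_diffSet (hJ ▸ hi)).symm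
  refine filter_congr fun a ha => ⟨fun hqa i hi => ?_, fun hoff => ?_⟩
  · have hK : diffSet q a = conflictSet c A a₀ := by
      rw [← h.symm.conflictSet_eq_diffSet hinv hfix hq ha hqa,
        h.symm.conflictSet_eq_diffSet hinv hfix hq ha₀ (hammingDist_comm a₀ q ▸ h2), diffSet_comm,
        hJ]
    rw [← hq₀ i hi]
    exact (eq_of_notMem_diffSet (hK ▸ hi)).symm
  · have hsub : diffSet q a ⊆ conflictSet c A a₀ := fun i hi => by
      by_contra hiJ
      exact mem_diffSet.1 hi ((hq₀ i hiJ).trans (hoff i hiJ).symm)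
    have := card_le_card hsub
    rw [card_diffSet, h.card_conflictSet hinv hfix ha₀] at this
    have := hammingDist_comm a q ▸ h.two_le_dist a ha q hq
    omega

/-- The words of `B` near `a₀` all have the same three words of `A` near them; a word `a₃` of `A`
outside these has three words of `B` near it, none near `a₀`, which leaves `B` too small. -/
theorem false (h : MutualCover c A B) (hinv : Function.Involutive c) (hfix : ∀ s, c s ≠ s) :
    False := by
  obtain ⟨a₀, ha₀⟩ := card_pos.1 (by rw [h.cardA]; norm_num : 0 < A.card)
  set A₀ := A.filter fun a => ∀ i ∉ conflictSet c A a₀, a i = a₀ i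
  have hnear : ∀ q ∈ B, hammingDist a₀ q = 2 → A.filter (hammingDist q · = 2) = A₀ :=
    fun q hq hq2 => h.filter_near_eq hinv hfix ha₀ hq hq2
  obtain ⟨q, hq, hq2⟩ := h.exists_near hinv hfix ha₀
  have hA₀ : A₀.card = 3 := by
    rw [← hnear q hq hq2]
    exact h.card_near hinv hfix hq
  obtain ⟨a₃, ha₃, ha₃A₀⟩ :=
    exists_mem_notMem_of_card_lt_card (by rw [hA₀, h.cardA]; norm_num : A₀.card < A.card)
  have hdisj : Disjoint (B.filter (hammingDist a₀ · = 2)) (B.filter (hammingDist a₃ · = 2)) :=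
    disjoint_left.2 fun q hq₀ hq₃ => ha₃A₀ <| by
      rw [← hnear q (mem_filter.1 hq₀).1 (mem_filter.1 hq₀).2]
      exact mem_filter.2 ⟨ha₃, hammingDist_comm a₃ q ▸ (mem_filter.1 hq₃).2⟩
  have := card_le_card (union_subset (filter_subset (hammingDist a₀ · = 2) B)
    (filter_subset (hammingDist a₃ · = 2) B))
  rw [card_union_of_disjoint hdisj, h.symm.card_near hinv hfix ha₀,
    h.symm.card_near hinv hfix ha₃, h.cardB] at this
  omega

end MutualCover

variable [Finite S]

theorem eq_of_equivCodes (hinv : Function.Involutive c) (hfix : ∀ s, c s ≠ s)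
    {F G : Finset (Fin d → S)} (hF : PolyboxCode c (F : Set (Fin d → S)))
    (hFt : NoTwinPair c (F : Set (Fin d → S))) (h5 : F.card = 5)
    (hG : PolyboxCode c (G : Set (Fin d → S))) (hFG : EquivCodes c (F : Set (Fin d → S)) G) :
    G = F := by
  have hG5 : G.card = 5 := (card_eq_of_equivCodes hinv hfix hF hG hFG).symm.trans h5
  by_contra hne
  obtain ⟨w₀, hw₀, hw₀F⟩ := not_subset.1 fun hsub => hne (eq_of_subset_of_card_le hsub (by omega))
  have hcovF : ∀ w ∈ G, Realize c w ⊆ RealizeSet c ↑F := fun w hw =>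
    hFG ▸ realize_subset_realizeSet (mem_coe.2 hw)
  have hcompat : ∀ w ∈ G, w ∉ F → ∀ v ∈ F, ¬Dicho c w v := fun w hw hwF =>
    forall_not_dicho_of_card_le_five hinv hfix hF hFt h5.le hwF (hcovF w hw)
  have hdisj : ∀ w ∈ G, w ∉ F := fun w hw hwF =>
    hcompat w₀ hw₀ hw₀F w hwF (hG w₀ hw₀ w hw (ne_of_mem_of_not_mem hwF hw₀F).symm)
  have hmut : MutualCover c F G :=
    { coverA := fun w hw => ⟨hF, hcompat w hw (hdisj w hw), hcovF w hw⟩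
      coverB := fun v hv => ⟨hG, fun w hw hd => hcompat w hw (hdisj w hw) v hv (Dicho.symm hinv hd),
        hFG ▸ realize_subset_realizeSet (mem_coe.2 hv)⟩
      two_le_dist := fun v hv w hw => hammingDist_comm w v ▸
        IsTwinFreeCover.two_le_hammingDist ⟨⟨hF, hcompat w hw (hdisj w hw), hcovF w hw⟩, hFt,
          hdisj w hw⟩ hinv hfix h5.le hv
      cardA := h5
      cardB := hG5 }
  exact hmut.false hinv hfix

end MutualCover

end Polybox

open Polybox in
theorem covered_word_card_ge_five_and_rigid {d : ℕ} [Fintype S] (c : S → S)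
    (hinv : Function.Involutive c) (hfix : ∀ s, c s ≠ s)
    (V : Set (Fin d → S)) (hV : PolyboxCode c V) (hVt : NoTwinPair c V)
    (w : Fin d → S) (hwV : w ∉ V)
    (hcov : Realize c w ⊆ RealizeSet c V) :
    5 ≤ V.ncard ∧
      (V.ncard = 5 →
        ∀ W : Set (Fin d → S), PolyboxCode c W → EquivCodes c V W → W = V) := by
  classical
  obtain ⟨F, rfl⟩ := V.toFinite.exists_finset_coe
  rw [Set.ncard_coe_finset]
  refine ⟨((isTwinFreeCover_filter hV hVt hwV hcov).five_le_card hinv hfix).trans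
    (card_filter_le _ _), fun h5 W hW hVW => ?_⟩
  obtain ⟨G, rfl⟩ := W.toFinite.exists_finset_coe
  rw [eq_of_equivCodes hinv hfix hV hVt h5 hW hVW]
end

section
/- Let S be a finite alphabet with a complementation, let d ≥ 2, and let V ⊆ (*S)^d be a partition code with exactly 3 words. Then there exist distinct indices i_1, i_2 ∈ {1,…,d} and letters l_1, l_2 ∈ S such that V = {v^1, v^2, v^3}, where v^1_{i_1} = l_1, v^2_{i_1} = v^3_{i_1} = (l_1)', v^2_{i_2} = l_2, v^3_{i_2} = (l_2)', and all remaining coordinates of v^1, v^2, v^3 (including v^1_{i_2}) are equal to *. -/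
/-!
The realization of a word with `k` letters fills the fraction `2⁻ᵏ` of the box `(ES)^d`:
complementation `B ↦ Bᶜ` matches the members of `ES` containing a letter `s` with those
containing `s'`. A partition code tiles the box, so its weights `2⁻ᵏ` add up to `1`, and for
three words, each carrying a letter, this forces `1/2 + 1/4 + 1/4`. The one-letter word, with
`l₁` at `i₁`, can only be dichotomous to the other two words at `i₁`, so both carry `l₁'` there.
Those two cannot be dichotomous at `i₁`, so they are dichotomous at their second letters, which
therefore share a position `i₂`.
-/

variable {S : Type}

/-- Words over `*S = S ∪ {*}` are modelled as `Fin d → Option S`, with `none = *`.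
Two words are dichotomous: at some position one carries a letter `s ≠ *`
and the other its complement. -/
def DichoStar {d : ℕ} (c : S → S) (u v : Fin d → Option S) : Prop :=
  ∃ j, ∃ s, u j = some s ∧ v j = some (c s)

/-- Two words over `*S` form a twin pair. -/
def TwinPairStar {d : ℕ} (c : S → S) (u v : Fin d → Option S) : Prop :=
  ∃ j, (∃ s, u j = some s ∧ v j = some (c s)) ∧ ∀ i, i ≠ j → v i = u i

/-- A polybox code over `*S`: a set of pairwise dichotomous words. -/
def PolyboxCodeStar {d : ℕ} (c : S → S) (V : Set (Fin d → Option S)) : Prop :=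
  ∀ u ∈ V, ∀ v ∈ V, u ≠ v → DichoStar c u v

/-- The code contains no twin pair. -/
def NoTwinPairStar {d : ℕ} (c : S → S) (V : Set (Fin d → Option S)) : Prop :=
  ∀ u ∈ V, ∀ v ∈ V, ¬ TwinPairStar c u v

/-- `Es` for `s ∈ *S`; `E* = ES`. -/
def ELetterStar (c : S → S) : Option S → Set (Set S)
  | none => ESet c
  | some s => {B | B ∈ ESet c ∧ s ∈ B}

/-- The equicomplementary realization `v̌ ⊆ (ES)^d` of a word over `*S`. -/
def RealizeStar {d : ℕ} (c : S → S) (v : Fin d → Option S) :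
    Set (Fin d → Set S) :=
  {x | ∀ i, x i ∈ ELetterStar c (v i)}

/-- The union `⋃_{v ∈ V} v̌`. -/
def RealizeSetStar {d : ℕ} (c : S → S) (V : Set (Fin d → Option S)) :
    Set (Fin d → Set S) :=
  ⋃ v ∈ V, RealizeStar c v

/-- Two codes are equivalent if their realizations coincide. -/
def EquivCodesStar {d : ℕ} (c : S → S) (V W : Set (Fin d → Option S)) : Prop :=
  RealizeSetStar c V = RealizeSetStar c W

/-- A partition code: a polybox code whose realization is the whole box `(ES)^d`. -/
def PartitionCodeStar {d : ℕ} (c : S → S) (U : Set (Fin d → Option S)) : Prop :=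
  PolyboxCodeStar c U ∧ RealizeSetStar c U = {x | ∀ i, x i ∈ ESet c}

theorem Set.ncard_univ_pi {ι : Type*} [Fintype ι] {α : ι → Type*} (s : ∀ i, Set (α i)) :
    (Set.univ.pi s).ncard = ∏ i, (s i).ncard := by
  simp only [← Nat.card_coe_set_eq, Nat.card_congr (Equiv.Set.univPi s), Nat.card_pi]

theorem Finset.exists_ne_eq_pair_of_card_eq_two {α : Type*} [DecidableEq α] {s : Finset α}
    {a : α} (hs : s.card = 2) (ha : a ∈ s) : ∃ b, b ≠ a ∧ s = {a, b} := by
  obtain ⟨b, hb⟩ := Finset.card_eq_one.mp (by rw [Finset.card_erase_of_mem ha, hs])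
  refine ⟨b, Finset.ne_of_mem_erase (hb ▸ Finset.mem_singleton_self b), ?_⟩
  rw [← Finset.insert_erase ha, hb]

lemma inv_two_pow_cases {k : ℕ} (hk : 1 ≤ k) :
    (k = 1 ∧ (2⁻¹ : ℚ) ^ k = 2⁻¹) ∨ (k = 2 ∧ (2⁻¹ : ℚ) ^ k = 4⁻¹) ∨
      (0 < (2⁻¹ : ℚ) ^ k ∧ (2⁻¹ : ℚ) ^ k ≤ 8⁻¹) := by
  rcases (by omega : k = 1 ∨ k = 2 ∨ 3 ≤ k) with rfl | rfl | hk
  · norm_num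
  · norm_num
  · refine Or.inr (Or.inr ⟨by positivity, ?_⟩)
    calc (2⁻¹ : ℚ) ^ k ≤ 2⁻¹ ^ 3 := pow_le_pow_of_le_one (by norm_num) (by norm_num) hk
      _ = 8⁻¹ := by norm_num

lemma eq_one_two_two_of_inv_two_pow_add_eq_one {x y z : ℕ} (hx : 1 ≤ x) (hy : 1 ≤ y)
    (hz : 1 ≤ z) (h : (2⁻¹ : ℚ) ^ x + 2⁻¹ ^ y + 2⁻¹ ^ z = 1) :
    (x = 1 ∧ y = 2 ∧ z = 2) ∨ (x = 2 ∧ y = 1 ∧ z = 2) ∨ (x = 2 ∧ y = 2 ∧ z = 1) := by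
  rcases inv_two_pow_cases hx with ⟨hx, ex⟩ | ⟨hx, ex⟩ | ⟨ex, ex'⟩ <;>
  rcases inv_two_pow_cases hy with ⟨hy, ey⟩ | ⟨hy, ey⟩ | ⟨ey, ey'⟩ <;>
  rcases inv_two_pow_cases hz with ⟨hz, ez⟩ | ⟨hz, ez⟩ | ⟨ez, ez'⟩ <;>
  first | omega | (exfalso; linarith)

def letterSupport {d : ℕ} (v : Fin d → Option S) : Finset (Fin d) :=
  Finset.univ.filter fun i => (v i).isSome

@[simp]
lemma mem_letterSupport {d : ℕ} {v : Fin d → Option S} {i : Fin d} :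
    i ∈ letterSupport v ↔ (v i).isSome := by
  simp [letterSupport]

lemma notMem_letterSupport {d : ℕ} {v : Fin d → Option S} {i : Fin d} :
    i ∉ letterSupport v ↔ v i = none := by
  simp [letterSupport]

section ESet

variable (c : S → S)

lemma compl_mem_ESet {B : Set S} (hB : B ∈ ESet c) : Bᶜ ∈ ESet c :=
  fun s => xor_not_not.mpr (hB s)

lemma ESet_nonempty (hinv : Function.Involutive c) (hfix : ∀ s, c s ≠ s) :
    (ESet c).Nonempty := by
  let _ : LinearOrder S := WellOrderingRel.isWellOrder.linearOrder
  refine ⟨{s | s < c s}, fun s => ?_⟩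
  simp only [Set.mem_ofPred_eq, hinv s]
  rcases (hfix s).lt_or_gt with h | h
  · exact Or.inr ⟨h, h.not_gt⟩
  · exact Or.inl ⟨h, h.not_gt⟩

variable [Fintype S]

lemma ncard_ELetterStar_some_mul_two (s : S) :
    (ELetterStar c (some s)).ncard * 2 = (ESet c).ncard := by
  have hsplit : ESet c = ELetterStar c (some s) ∪ compl '' ELetterStar c (some s) := by
    ext B
    simp only [ELetterStar, Set.mem_union, Set.mem_image, Set.mem_ofPred_eq]
    constructor
    · intro hB
      by_cases hs : s ∈ B
      · exact Or.inl ⟨hB, hs⟩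
      · exact Or.inr ⟨Bᶜ, ⟨compl_mem_ESet c hB, hs⟩, compl_compl B⟩
    · rintro (⟨hB, -⟩ | ⟨C, ⟨hC, -⟩, rfl⟩)
      exacts [hB, compl_mem_ESet c hC]
  have hdisj : Disjoint (ELetterStar c (some s)) (compl '' ELetterStar c (some s)) := by
    rw [Set.disjoint_left]
    rintro B ⟨-, hsB⟩ ⟨C, ⟨-, hsC⟩, rfl⟩
    exact hsB hsC
  conv_rhs => rw [hsplit, Set.ncard_union_eq hdisj, Set.ncard_image_of_injective _ compl_injective]
  ring

lemma ncard_ELetterStar_mul (o : Option S) :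
    (ELetterStar c o).ncard * (if o.isSome then 2 else 1) = (ESet c).ncard := by
  cases o with
  | none => simp [ELetterStar]
  | some s => simpa using ncard_ELetterStar_some_mul_two c s

theorem ncard_realizeStar_mul_two_pow {d : ℕ} (v : Fin d → Option S) :
    (RealizeStar c v).ncard * 2 ^ (letterSupport v).card = (ESet c).ncard ^ d := by
  have hpi : RealizeStar c v = Set.univ.pi fun i => ELetterStar c (v i) := by
    ext x
    simp [RealizeStar]
  have hpow : 2 ^ (letterSupport v).card = ∏ i, if (v i).isSome then 2 else 1 := by
    rw [letterSupport, ← Finset.prod_const, Finset.prod_filter]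
  rw [hpi, Set.ncard_univ_pi, hpow, ← Finset.prod_mul_distrib]
  simp only [ncard_ELetterStar_mul, Finset.prod_const, Finset.card_univ, Fintype.card_fin]

end ESet

section Realization

variable {c : S → S} {d : ℕ}

lemma DichoStar.card_letterSupport_pos {u v : Fin d → Option S} (h : DichoStar c u v) :
    0 < (letterSupport u).card := by
  obtain ⟨j, s, hu, -⟩ := h
  exact Finset.card_pos.mpr ⟨j, by simp [hu]⟩

lemma DichoStar.disjoint_realizeStar {u v : Fin d → Option S} (h : DichoStar c u v) :
    Disjoint (RealizeStar c u) (RealizeStar c v) := by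
  obtain ⟨j, s, hu, hv⟩ := h
  refine Set.disjoint_left.mpr fun x hxu hxv => ?_
  have hu' := hxu j
  have hv' := hxv j
  rw [hu] at hu'
  rw [hv] at hv'
  exact ((xor_iff_or_and_not_and _ _).mp (hu'.1 s)).2 ⟨hu'.2, hv'.2⟩

lemma DichoStar.apply_eq_of_letterSupport_eq_singleton {u v : Fin d → Option S} {i : Fin d}
    {l : S} (h : DichoStar c u v) (hu : letterSupport u = {i}) (hl : u i = some l) :
    v i = some (c l) := by
  obtain ⟨j, s, huj, hvj⟩ := h
  have hj : j ∈ letterSupport u := by simp [huj]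
  rw [hu, Finset.mem_singleton] at hj
  subst hj
  rw [hl, Option.some_inj] at huj
  rwa [huj]

variable [Fintype S]

theorem PartitionCodeStar.finsum_inv_two_pow_card_letterSupport {V : Set (Fin d → Option S)}
    (hV : PartitionCodeStar c V) (hE : (ESet c).Nonempty) (hfin : V.Finite) :
    ∑ᶠ v ∈ V, (2⁻¹ : ℚ) ^ (letterSupport v).card = 1 := by
  set N := (ESet c).ncard
  have hN : (N : ℚ) ≠ 0 := by exact_mod_cast ((Set.ncard_pos (Set.toFinite _)).mpr hE).ne'
  have hbox : ({x : Fin d → Set S | ∀ i, x i ∈ ESet c}).ncard = N ^ d := by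
    simpa [letterSupport, RealizeStar, ELetterStar] using
      ncard_realizeStar_mul_two_pow c (fun _ : Fin d => none)
  have hsum : N ^ d = ∑ᶠ v ∈ V, (RealizeStar c v).ncard := by
    rw [← hbox, ← hV.2, RealizeSetStar, hfin.ncard_biUnion (fun _ _ => Set.toFinite _)
      fun u hu v hv huv => (hV.1 u hu v hv huv).disjoint_realizeStar]
  have hcard (v : Fin d → Option S) :
      ((RealizeStar c v).ncard : ℚ) = N ^ d * 2⁻¹ ^ (letterSupport v).card := by
    have h : ((RealizeStar c v).ncard : ℚ) * 2 ^ (letterSupport v).card = N ^ d := by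
      exact_mod_cast ncard_realizeStar_mul_two_pow c v
    rw [← h, inv_pow, mul_inv_cancel_right₀ (by positivity)]
  have hsumℚ := congrArg (Nat.cast : ℕ → ℚ) hsum
  rw [Nat.cast_finsum_mem hfin] at hsumℚ
  simp_rw [hcard, ← mul_finsum_mem] at hsumℚ
  push_cast at hsumℚ
  exact mul_left_cancel₀ (pow_ne_zero d hN) (hsumℚ.symm.trans (mul_one _).symm)

end Realization

lemma exists_of_card_letterSupport_eq_one_two_two {c : S → S} {d : ℕ} (hfix : ∀ s, c s ≠ s)
    {a b e : Fin d → Option S} (hab : DichoStar c a b) (hae : DichoStar c a e)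
    (hbe : DichoStar c b e) (ha : (letterSupport a).card = 1)
    (hb : (letterSupport b).card = 2) (he : (letterSupport e).card = 2) :
    ∃ (i₁ i₂ : Fin d), i₁ ≠ i₂ ∧ ∃ (l₁ l₂ : S),
      a i₁ = some l₁ ∧ b i₁ = some (c l₁) ∧ e i₁ = some (c l₁) ∧
      a i₂ = none ∧ b i₂ = some l₂ ∧ e i₂ = some (c l₂) ∧
      ∀ j, j ≠ i₁ → j ≠ i₂ → a j = none ∧ b j = none ∧ e j = none := by
  obtain ⟨i₁, ha₁⟩ := Finset.card_eq_one.mp ha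
  obtain ⟨l₁, hal₁⟩ := Option.isSome_iff_exists.mp
    (mem_letterSupport.mp (ha₁ ▸ Finset.mem_singleton_self i₁))
  have hbl₁ := hab.apply_eq_of_letterSupport_eq_singleton ha₁ hal₁
  have hel₁ := hae.apply_eq_of_letterSupport_eq_singleton ha₁ hal₁
  obtain ⟨i₂, hi₂, hb₂⟩ := Finset.exists_ne_eq_pair_of_card_eq_two hb (a := i₁) (by simp [hbl₁])
  obtain ⟨i₃, hi₃, he₃⟩ := Finset.exists_ne_eq_pair_of_card_eq_two he (a := i₁) (by simp [hel₁])
  obtain ⟨j, l₂, hbj, hej⟩ := hbe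
  have hj : j ≠ i₁ := by
    rintro rfl
    rw [hbl₁, Option.some_inj] at hbj
    rw [hel₁, Option.some_inj, ← hbj] at hej
    exact hfix (c l₁) hej.symm
  have hj₂ : j = i₂ := by
    have hjb : j ∈ letterSupport b := by simp [hbj]
    simpa [hb₂, hj] using hjb
  have hj₃ : j = i₃ := by
    have hje : j ∈ letterSupport e := by simp [hej]
    simpa [he₃, hj] using hje
  subst hj₂ hj₃
  refine ⟨i₁, j, hj.symm, l₁, l₂, hal₁, hbl₁, hel₁, ?_, hbj, hej, fun k hk₁ hk₂ => ?_⟩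
  · simpa [← notMem_letterSupport, ha₁] using hj
  · simp only [← notMem_letterSupport, ha₁, hb₂, he₃, Finset.mem_insert, Finset.mem_singleton]
    tauto

theorem partition_code_three_words_general {d : ℕ} [Fintype S] (c : S → S)
    (hinv : Function.Involutive c) (hfix : ∀ s, c s ≠ s)
    (V : Set (Fin d → Option S)) (hV : PartitionCodeStar c V)
    (hcard : V.ncard = 3) :
    ∃ (i₁ i₂ : Fin d), i₁ ≠ i₂ ∧ ∃ (l₁ l₂ : S),
      ∃ v₁ v₂ v₃ : Fin d → Option S,
        V = {v₁, v₂, v₃} ∧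
        v₁ i₁ = some l₁ ∧ v₂ i₁ = some (c l₁) ∧ v₃ i₁ = some (c l₁) ∧
        v₁ i₂ = none ∧ v₂ i₂ = some l₂ ∧ v₃ i₂ = some (c l₂) ∧
        ∀ j, j ≠ i₁ → j ≠ i₂ → v₁ j = none ∧ v₂ j = none ∧ v₃ j = none := by
  obtain ⟨a, b, e, hab, hae, hbe, rfl⟩ := Set.ncard_eq_three.mp hcard
  have ha : a ∈ ({a, b, e} : Set _) := by simp
  have hb : b ∈ ({a, b, e} : Set _) := by simp
  have he : e ∈ ({a, b, e} : Set _) := by simp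
  have hD := hV.1
  have hweight := hV.finsum_inv_two_pow_card_letterSupport (ESet_nonempty c hinv hfix)
    (Set.toFinite _)
  rw [finsum_mem_insert _ (by simp [hab, hae]) (Set.toFinite _), finsum_mem_pair hbe,
    ← add_assoc] at hweight
  rcases eq_one_two_two_of_inv_two_pow_add_eq_one (hD a ha b hb hab).card_letterSupport_pos
    (hD b hb a ha hab.symm).card_letterSupport_pos (hD e he a ha hae.symm).card_letterSupport_pos
    hweight with ⟨ka, kb, ke⟩ | ⟨ka, kb, ke⟩ | ⟨ka, kb, ke⟩
  · obtain ⟨i₁, i₂, hi, l₁, l₂, h⟩ := exists_of_card_letterSupport_eq_one_two_two hfix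
      (hD a ha b hb hab) (hD a ha e he hae) (hD b hb e he hbe) ka kb ke
    exact ⟨i₁, i₂, hi, l₁, l₂, a, b, e, rfl, h⟩
  · obtain ⟨i₁, i₂, hi, l₁, l₂, h⟩ := exists_of_card_letterSupport_eq_one_two_two hfix
      (hD b hb a ha hab.symm) (hD b hb e he hbe) (hD a ha e he hae) kb ka ke
    exact ⟨i₁, i₂, hi, l₁, l₂, b, a, e, Set.insert_comm _ _ _, h⟩
  · obtain ⟨i₁, i₂, hi, l₁, l₂, h⟩ := exists_of_card_letterSupport_eq_one_two_two hfix
      (hD e he a ha hae.symm) (hD e he b hb hbe.symm) (hD a ha b hb hab) ke ka kb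
    exact ⟨i₁, i₂, hi, l₁, l₂, e, a, b, by rw [Set.pair_comm, Set.insert_comm], h⟩

theorem partition_code_three_words {d : ℕ} [Fintype S] (c : S → S)
    (hinv : Function.Involutive c) (hfix : ∀ s, c s ≠ s) (hd : 2 ≤ d)
    (V : Set (Fin d → Option S)) (hV : PartitionCodeStar c V)
    (hcard : V.ncard = 3) :
    ∃ (i₁ i₂ : Fin d), i₁ ≠ i₂ ∧ ∃ (l₁ l₂ : S),
      ∃ v₁ v₂ v₃ : Fin d → Option S,
        V = {v₁, v₂, v₃} ∧
        v₁ i₁ = some l₁ ∧ v₂ i₁ = some (c l₁) ∧ v₃ i₁ = some (c l₁) ∧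
        v₁ i₂ = none ∧ v₂ i₂ = some l₂ ∧ v₃ i₂ = some (c l₂) ∧
        ∀ j, j ≠ i₁ → j ≠ i₂ → v₁ j = none ∧ v₂ j = none ∧ v₃ j = none :=
  partition_code_three_words_general c hinv hfix V hV hcard
end
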